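/- arXiv:1808.06297 — 4 statements merged into one kernel-verified Lean document; each statement's English description precedes it below -/
import Mathlib

section
/- Let F be a commutative unital ring and let (A,[,]_A,ρ) be a generalized Lie algebra over F such that A is a faithful F-module (i.e., if f·w = g·w for all w ∈ A then f = g). Then the anchor map ρ preserves brackets: for all u, v ∈ A one has ρ([u,v]_A) = ρ(u)∘ρ(v) − ρ(v)∘ρ(u), the commutator bracket of the derivations ρ(u) and ρ(v). -/
/-- If `(A, [,], ρ)` is a generalized Lie algebra over a commutative
unital ring `F` (biadditive alternating bracket satisfying the Jacobi identity, with
`F`-linear anchor `ρ : A → Der(F)` satisfying the compatibility condition) and `A` is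
a faithful `F`-module, then the anchor preserves brackets:
`ρ([u,v]) = ρ(u) ∘ ρ(v) − ρ(v) ∘ ρ(u)`. -/
theorem generalizedLieAlgebra_anchor_preserves_bracket
    {F : Type*} [CommRing F] {A : Type*} [AddCommGroup A] [Module F A]
    (bracket : A → A → A)
    (hadd_left : ∀ u v w : A, bracket (u + v) w = bracket u w + bracket v w)
    (hadd_right : ∀ u v w : A, bracket u (v + w) = bracket u v + bracket u w)
    (halt : ∀ u : A, bracket u u = 0)
    (hjacobi : ∀ u v z : A,
      bracket u (bracket v z) + bracket z (bracket u v) + bracket v (bracket z u) = 0)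
    (ρ : A →ₗ[F] Derivation ℤ F F)
    (hcompat : ∀ (u v : A) (f : F), bracket u (f • v) = f • bracket u v + (ρ u f) • v)
    (hfaithful : ∀ f g : F, (∀ w : A, f • w = g • w) → f = g)
    (u v : A) (f : F) :
    ρ (bracket u v) f = ρ u (ρ v f) - ρ v (ρ u f) := by
  apply hfaithful
  intro w
  -- antisymmetry
  have hanti : ∀ a b : A, bracket a b = - bracket b a := by
    intro a b
    have h := halt (a + b)
    rw [hadd_left, hadd_right, hadd_right, halt, halt] at h
    simp only [zero_add, add_zero] at h
    exact eq_neg_of_add_eq_zero_left h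
  have hzero : ∀ a : A, bracket a 0 = 0 := by
    intro a
    have h := hadd_right a 0 0
    simp only [add_zero] at h
    exact (left_eq_add.mp h)
  have hneg : ∀ a b : A, bracket a (-b) = - bracket a b := by
    intro a b
    have h := hadd_right a b (-b)
    rw [add_neg_cancel, hzero] at h
    exact eq_neg_of_add_eq_zero_right h.symm
  have j := hjacobi u v (f • w)
  rw [hanti (f • w) (bracket u v), hanti (f • w) u, hneg] at j
  rw [hcompat v w f, hcompat u w f, hadd_right, hadd_right, hcompat u (bracket v w) f,
    hcompat v (bracket u w) f, hcompat u w (ρ v f), hcompat v w (ρ u f),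
    hcompat (bracket u v) w f] at j
  have jac := hjacobi u v w
  rw [hanti w (bracket u v), hanti w u, hneg] at jac
  have e1 : ρ u (ρ v f) = (ρ u) (ρ v f) := rfl
  -- combine
  linear_combination (norm := module) f • jac - j
end

section
/- Let F be a commutative unital ring and let (A,[,]_A,ρ) be a generalized Lie algebra over F. If there exist u, v ∈ A such that ρ([u,v]_A) ≠ ρ(u)∘ρ(v) − ρ(v)∘ρ(u), then A is not a faithful F-module, i.e. there exist f, g ∈ F with f ≠ g and f·w = g·w for all w ∈ A. -/
/-!
Expand the Leibniz form of the Jacobi identity on `u, v, f • w` with the compatibility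
condition. The terms `f • ⁅·, ⁅·, ·⁆⁆` cancel by `f` times the Jacobi identity on `u, v, w`, the
first-order terms `ρ _ f • ⁅_, w⁆` cancel in pairs, and what is left says that the curvature
`(⁅ρ u, ρ v⁆ - ρ ⁅u, v⁆) f` annihilates every `w`. So it is a nonzero scalar acting on `A`
as `0` does.
-/

section Bracket

variable {A : Type*} [AddCommGroup A] (bracket : A → A → A)

theorem bracket_neg_right (hadd_right : ∀ u v w : A, bracket u (v + w) = bracket u v + bracket u w)
    (u v : A) : bracket u (-v) = -bracket u v :=
  (AddMonoidHom.mk' (bracket u) (hadd_right u)).map_neg v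

theorem bracket_eq_neg_bracket_of_alternating
    (hadd_left : ∀ u v w : A, bracket (u + v) w = bracket u w + bracket v w)
    (hadd_right : ∀ u v w : A, bracket u (v + w) = bracket u v + bracket u w)
    (halt : ∀ u : A, bracket u u = 0) (u v : A) : bracket u v = -bracket v u := by
  have h := halt (u + v)
  rw [hadd_left, hadd_right, hadd_right, halt, halt, zero_add, add_zero] at h
  exact eq_neg_of_add_eq_zero_left h

theorem leibniz_of_jacobi
    (hadd_left : ∀ u v w : A, bracket (u + v) w = bracket u w + bracket v w)
    (hadd_right : ∀ u v w : A, bracket u (v + w) = bracket u v + bracket u w)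
    (halt : ∀ u : A, bracket u u = 0)
    (hjacobi : ∀ u v z : A,
      bracket u (bracket v z) + bracket z (bracket u v) + bracket v (bracket z u) = 0)
    (u v w : A) :
    bracket u (bracket v w) = bracket (bracket u v) w + bracket v (bracket u w) := by
  have h := hjacobi u v w
  rw [bracket_eq_neg_bracket_of_alternating bracket hadd_left hadd_right halt w,
    bracket_eq_neg_bracket_of_alternating bracket hadd_left hadd_right halt w u,
    bracket_neg_right bracket hadd_right] at h
  rw [← sub_eq_zero, ← h]
  abel

abbrev lieRingOfJacobi
    (hadd_left : ∀ u v w : A, bracket (u + v) w = bracket u w + bracket v w)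
    (hadd_right : ∀ u v w : A, bracket u (v + w) = bracket u v + bracket u w)
    (halt : ∀ u : A, bracket u u = 0)
    (hjacobi : ∀ u v z : A,
      bracket u (bracket v z) + bracket z (bracket u v) + bracket v (bracket z u) = 0) :
    LieRing A where
  bracket := bracket
  add_lie := hadd_left
  lie_add := hadd_right
  lie_self := halt
  leibniz_lie := leibniz_of_jacobi bracket hadd_left hadd_right halt hjacobi

end Bracket

theorem anchor_curvature_smul_eq_zero {F L : Type*} [CommRing F] [LieRing L] [Module F L]
    (ρ : L → Derivation ℤ F F)
    (hcompat : ∀ (u v : L) (f : F), ⁅u, f • v⁆ = f • ⁅u, v⁆ + ρ u f • v) (u v w : L) (f : F) :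
    (⁅ρ u, ρ v⁆ - ρ ⁅u, v⁆) f • w = 0 := by
  have h := leibniz_lie u v (f • w)
  simp only [hcompat, lie_add, leibniz_lie u v w, smul_add] at h
  rw [Derivation.sub_apply, Derivation.commutator_apply]
  linear_combination (norm := module) h

/-- If `(A, [,], ρ)` is a generalized Lie algebra over a commutative
unital ring `F` and there exist `u, v ∈ A` whose bracket is not sent by the anchor `ρ`
to the commutator `ρ(u) ∘ ρ(v) − ρ(v) ∘ ρ(u)`, then `A` is not a faithful `F`-module:
there exist `f ≠ g` in `F` acting identically on `A`. -/
theorem generalizedLieAlgebra_not_faithful_of_anchor_not_bracket_preserving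
    {F : Type*} [CommRing F] {A : Type*} [AddCommGroup A] [Module F A]
    (bracket : A → A → A)
    (hadd_left : ∀ u v w : A, bracket (u + v) w = bracket u w + bracket v w)
    (hadd_right : ∀ u v w : A, bracket u (v + w) = bracket u v + bracket u w)
    (halt : ∀ u : A, bracket u u = 0)
    (hjacobi : ∀ u v z : A,
      bracket u (bracket v z) + bracket z (bracket u v) + bracket v (bracket z u) = 0)
    (ρ : A →ₗ[F] Derivation ℤ F F)
    (hcompat : ∀ (u v : A) (f : F), bracket u (f • v) = f • bracket u v + (ρ u f) • v)
    (h : ∃ u v : A, ∃ f : F, ρ (bracket u v) f ≠ ρ u (ρ v f) - ρ v (ρ u f)) :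
    ∃ f g : F, f ≠ g ∧ ∀ w : A, f • w = g • w := by
  obtain ⟨u, v, f, hne⟩ := h
  let _ := lieRingOfJacobi bracket hadd_left hadd_right halt hjacobi
  refine ⟨(⁅ρ u, ρ v⁆ - ρ ⁅u, v⁆) f, 0, ?_, fun w => ?_⟩
  · rw [Derivation.sub_apply, Derivation.commutator_apply, sub_ne_zero]
    exact hne.symm
  · rw [zero_smul]
    exact anchor_curvature_smul_eq_zero ρ hcompat u v w f
end

section
/- Let F be a commutative unital ring such that Der(F) is a free F-module with finite basis {∂_i}, and let ρ be an F-module endomorphism of Der(F). For X, Y ∈ Der(F), writing Y = Σ_i Yⁱ·∂_i, define the additive endomorphism X•Y of F by X•Y = Σ_i Yⁱ·(X∘∂_i) + ρ(X)(Yⁱ)·∂_i, and set [X,Y]• = X•Y − Y•X. Then [X,Y]• is again a derivation of F: for all f, g ∈ F, [X,Y]•(f·g) = [X,Y]•(f)·g + f·[X,Y]•(g). -/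
/-- The operation `X • Y = Σ_i Yⁱ·(X∘∂_i) + ρ(X)(Yⁱ)·∂_i`, as an additive endomorphism
of `F`, where `Yⁱ` are the coordinates of `Y` in the basis `{∂_i}` of `Der(F)`. -/
noncomputable def derBullet {F : Type*} [CommRing F] {ι : Type*} [Fintype ι]
    (b : Module.Basis ι F (Derivation ℤ F F))
    (ρ : Derivation ℤ F F →ₗ[F] Derivation ℤ F F)
    (X Y : Derivation ℤ F F) : F → F :=
  fun f => ∑ i, (b.repr Y i * X (b i f) + (ρ X) (b.repr Y i) * b i f)

/-- The bracket `[X,Y]• = X•Y − Y•X`, as an additive endomorphism of `F`. -/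
noncomputable def derBulletBracket {F : Type*} [CommRing F] {ι : Type*} [Fintype ι]
    (b : Module.Basis ι F (Derivation ℤ F F))
    (ρ : Derivation ℤ F F →ₗ[F] Derivation ℤ F F)
    (X Y : Derivation ℤ F F) : F → F :=
  fun f => derBullet b ρ X Y f - derBullet b ρ Y X f

/-!
The first-order part `Σ_i ρ(X)(Yⁱ)·∂_i` of `X•Y` is a derivation, while the second-order part
`Σ_i Yⁱ·(X∘∂_i)` fails the Leibniz rule by `X f · Y g + Y f · X g`, once `Σ_i Yⁱ·∂_i` is
recognised as `Y`. This defect is symmetric in `X` and `Y`, so it cancels in `X•Y − Y•X`.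
-/

theorem Derivation.sum_repr_smul_apply {R A M ι : Type*} [CommSemiring R] [CommSemiring A]
    [Algebra R A] [AddCommMonoid M] [Module A M] [Module R M] [IsScalarTower R A M]
    [Fintype ι] (b : Module.Basis ι A (Derivation R A M)) (D : Derivation R A M) (a : A) :
    ∑ i, b.repr D i • b i a = D a := by
  have h := congrFun (map_sum Derivation.coeFnAddMonoidHom (fun i => b.repr D i • b i) .univ) a
  simpa only [Derivation.coeFnAddMonoidHom_apply, Derivation.coe_smul, Finset.sum_apply,
    Pi.smul_apply, b.sum_repr D] using h.symm

theorem derBullet_mul {F : Type*} [CommRing F] {ι : Type*} [Fintype ι]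
    (b : Module.Basis ι F (Derivation ℤ F F))
    (ρ : Derivation ℤ F F →ₗ[F] Derivation ℤ F F)
    (X Y : Derivation ℤ F F) (f g : F) :
    derBullet b ρ X Y (f * g) =
      derBullet b ρ X Y f * g + f * derBullet b ρ X Y g + (X f * Y g + Y f * X g) := by
  have hY (a : F) : ∑ i, b.repr Y i * b i a = Y a := Derivation.sum_repr_smul_apply b Y a
  calc derBullet b ρ X Y (f * g)
      = ∑ i, ((b.repr Y i * X (b i f) + ρ X (b.repr Y i) * b i f) * g
          + f * (b.repr Y i * X (b i g) + ρ X (b.repr Y i) * b i g)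
          + (X f * (b.repr Y i * b i g) + (b.repr Y i * b i f) * X g)) := by
        refine Finset.sum_congr rfl fun i _ => ?_
        simp only [Derivation.leibniz, map_add, smul_eq_mul]
        ring
    _ = derBullet b ρ X Y f * g + f * derBullet b ρ X Y g + (X f * Y g + Y f * X g) := by
        simp only [Finset.sum_add_distrib, ← Finset.sum_mul, ← Finset.mul_sum, hY, derBullet]

/-- If `Der(F)` is a free `F`-module with finite basis `{∂_i}` and `ρ`
is an `F`-module endomorphism of `Der(F)`, then the bracket `[X,Y]• = X•Y − Y•X` is
again a derivation of `F`, i.e. it satisfies the Leibniz rule. -/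
theorem derBulletBracket_leibniz
    {F : Type*} [CommRing F] {ι : Type*} [Fintype ι]
    (b : Module.Basis ι F (Derivation ℤ F F))
    (ρ : Derivation ℤ F F →ₗ[F] Derivation ℤ F F)
    (X Y : Derivation ℤ F F) (f g : F) :
    derBulletBracket b ρ X Y (f * g)
      = derBulletBracket b ρ X Y f * g + f * derBulletBracket b ρ X Y g := by
  simp only [derBulletBracket, derBullet_mul]
  ring
end

section
/- Let F be a commutative unital ring such that Der(F) is a free F-module with finite basis {∂_i}, let ρ be an F-module endomorphism of Der(F), and let [,]• be the bracket defined by [X,Y]• = X•Y − Y•X with X•Y = Σ_i Yⁱ·(X∘∂_i) + ρ(X)(Yⁱ)·∂_i. Then for all X, Y ∈ Der(F) and all f ∈ F, the compatibility condition [X, f·Y]• = f·[X,Y]• + ρ(X)(f)·Y holds (as additive endomorphisms of F). -/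
theorem Module.Basis.sum_repr_mul_derivation_apply {R A ι : Type*} [CommRing R] [CommRing A]
    [Algebra R A] [Fintype ι] (b : Module.Basis ι A (Derivation R A A))
    (Y : Derivation R A A) (g : A) :
    ∑ i, b.repr Y i * b i g = Y g :=
  calc ∑ i, b.repr Y i * b i g = Derivation.coeFnAddMonoidHom (∑ i, b.repr Y i • b i) g := by
        rw [map_sum, Finset.sum_apply]; rfl
    _ = Y g := by rw [b.sum_repr]; rfl

section derBullet

variable {F ι : Type*} [CommRing F] [Fintype ι] (b : Module.Basis ι F (Derivation ℤ F F))
  (ρ : Derivation ℤ F F →ₗ[F] Derivation ℤ F F) (X Y : Derivation ℤ F F) (f g : F)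

theorem derBullet_smul_left : derBullet b ρ (f • X) Y g = f * derBullet b ρ X Y g := by
  simp only [derBullet, map_smul, Derivation.smul_apply, smul_eq_mul, Finset.mul_sum]
  congr! 1 with i
  ring

-- The Leibniz rule for `ρ X` on the coordinates `f * Yⁱ` yields the extra term
-- `ρ X f * Σ Yⁱ ∂_i g = ρ X f * Y g`.
theorem derBullet_smul_right :
    derBullet b ρ X (f • Y) g = f * derBullet b ρ X Y g + ρ X f * Y g := by
  rw [← b.sum_repr_mul_derivation_apply Y g]
  simp only [derBullet, map_smul, Finsupp.smul_apply, smul_eq_mul, Derivation.leibniz,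
    Finset.mul_sum, ← Finset.sum_add_distrib]
  congr! 1 with i
  ring

end derBullet

/-- If `Der(F)` is a free `F`-module with finite basis `{∂_i}` and `ρ`
is an `F`-module endomorphism of `Der(F)`, then the bracket `[X,Y]• = X•Y − Y•X`
satisfies the compatibility condition `[X, f·Y]• = f·[X,Y]• + ρ(X)(f)·Y`, as additive
endomorphisms of `F`. -/
theorem derBulletBracket_compat
    {F : Type*} [CommRing F] {ι : Type*} [Fintype ι]
    (b : Module.Basis ι F (Derivation ℤ F F))
    (ρ : Derivation ℤ F F →ₗ[F] Derivation ℤ F F)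
    (X Y : Derivation ℤ F F) (f : F) (g : F) :
    derBulletBracket b ρ X (f • Y) g
      = f * derBulletBracket b ρ X Y g + (ρ X) f * Y g := by
  simp only [derBulletBracket, derBullet_smul_right, derBullet_smul_left]
  ring
end
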